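/- Let A be an n × n real symmetric positive semidefinite matrix and W an n × m real matrix (m ≤ n) with 1 − Wᵀ * W positive semidefinite (i.e., WᵀW ⪯ I). Let λ_1 ≥ ⋯ ≥ λ_n be the eigenvalues of A in nonincreasing order and μ_1 ≥ ⋯ ≥ μ_m the eigenvalues of Wᵀ * A * W in nonincreasing order (with multiplicity). Then μ_r ≤ λ_r for every r = 1, …, m. -/

import Mathlib

open Matrix
open scoped BigOperators

section Aux

lemma sum_dot' {k l : ℕ} (s : Finset (Fin l)) (f : Fin l → Fin k → ℝ) (z : Fin k → ℝ) :
    (∑ i ∈ s, f i) ⬝ᵥ z = ∑ i ∈ s, f i ⬝ᵥ z := by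
  simp only [dotProduct, Finset.sum_apply, Finset.sum_mul]
  exact Finset.sum_comm

lemma dot_sum' {k l : ℕ} (s : Finset (Fin l)) (z : Fin k → ℝ) (f : Fin l → Fin k → ℝ) :
    z ⬝ᵥ (∑ i ∈ s, f i) = ∑ i ∈ s, z ⬝ᵥ f i := by
  simp only [dotProduct, Finset.sum_apply, Finset.mul_sum]
  exact Finset.sum_comm

lemma dot_ortho' {k : ℕ} {M : Matrix (Fin k) (Fin k) ℝ} (hM : M.IsHermitian) (i j : Fin k) :
    ⇑(hM.eigenvectorBasis i) ⬝ᵥ ⇑(hM.eigenvectorBasis j) = if i = j then 1 else 0 := by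
  have h := hM.eigenvectorBasis.orthonormal
  rw [orthonormal_iff_ite] at h
  have := h i j
  rw [PiLp.inner_apply] at this
  simpa [dotProduct, mul_comm] using this

lemma dot_sum_sum' {k : ℕ} (v : Fin k → Fin k → ℝ)
    (hv : ∀ i j, v i ⬝ᵥ v j = if i = j then 1 else 0)
    (s : Finset (Fin k)) (a c : Fin k → ℝ) :
    (∑ i ∈ s, a i • v i) ⬝ᵥ (∑ j ∈ s, c j • v j) = ∑ i ∈ s, a i * c i := by
  rw [sum_dot']
  refine Finset.sum_congr rfl fun i hi => ?_
  rw [smul_dotProduct, dot_sum', Finset.sum_eq_single i]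
  · rw [dotProduct_smul, hv i i]; simp [smul_eq_mul]
  · intro j hj hne
    rw [dotProduct_smul, hv i j, if_neg (Ne.symm hne)]; simp
  · intro h; exact absurd hi h

lemma span_repr_aux' {k : ℕ} (b : OrthonormalBasis (Fin k) ℝ (EuclideanSpace ℝ (Fin k)))
    (s : Finset (Fin k)) (y : EuclideanSpace ℝ (Fin k))
    (hy : y ∈ Submodule.span ℝ (⇑b '' ↑s)) :
    ∃ c : Fin k → ℝ, ⇑y = ∑ i ∈ s, c i • ⇑(b i) := by
  induction hy using Submodule.span_induction with
  | mem z hz =>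
      obtain ⟨i, hi, rfl⟩ := hz
      exact ⟨fun j => if j = i then 1 else 0, by
        rw [Finset.sum_eq_single i]
        · simp
        · intro j hj hne; simp [hne]
        · intro h; exact absurd hi h⟩
  | zero => exact ⟨0, by simp⟩
  | add z w _ _ hz hw =>
      obtain ⟨c, hc⟩ := hz; obtain ⟨d, hd⟩ := hw
      exact ⟨c + d, by
        rw [WithLp.ofLp_add, hc, hd, ← Finset.sum_add_distrib]
        congr 1; ext i; ring_nf; simp [add_mul]⟩
  | smul a z _ hz =>
      obtain ⟨c, hc⟩ := hz
      exact ⟨a • c, by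
        rw [WithLp.ofLp_smul, hc, Finset.smul_sum]
        congr 1; ext i; simp [smul_smul]; ring⟩

lemma quad_repr' {k : ℕ} {M : Matrix (Fin k) (Fin k) ℝ} (hM : M.IsHermitian)
    (s : Finset (Fin k)) (y : EuclideanSpace ℝ (Fin k))
    (hy : y ∈ Submodule.span ℝ (⇑hM.eigenvectorBasis '' ↑s)) :
    ∃ c : Fin k → ℝ, (⇑y ⬝ᵥ ⇑y = ∑ i ∈ s, c i * c i) ∧
      (⇑y ⬝ᵥ (M *ᵥ ⇑y) = ∑ i ∈ s, hM.eigenvalues i * (c i * c i)) := by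
  obtain ⟨c, hc⟩ := span_repr_aux' hM.eigenvectorBasis s y hy
  refine ⟨c, ?_, ?_⟩
  · rw [hc]; exact dot_sum_sum' _ (dot_ortho' hM) s c c
  · have hMy : M *ᵥ ⇑y = ∑ i ∈ s, (c i * hM.eigenvalues i) • ⇑(hM.eigenvectorBasis i) := by
      rw [hc, ← Matrix.mulVecLin_apply, map_sum]
      refine Finset.sum_congr rfl fun i hi => ?_
      rw [_root_.map_smul, Matrix.mulVecLin_apply, hM.mulVec_eigenvectorBasis, smul_smul]
    rw [hMy, hc, dot_sum_sum' _ (dot_ortho' hM) s c _]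
    refine Finset.sum_congr rfl fun i hi => ?_
    ring

lemma finrank_span_onb' {k : ℕ} (b : OrthonormalBasis (Fin k) ℝ (EuclideanSpace ℝ (Fin k)))
    (s : Finset (Fin k)) :
    Module.finrank ℝ (Submodule.span ℝ (⇑b '' ↑s)) = s.card := by
  have li : LinearIndependent ℝ ⇑b := by
    simpa using b.toBasis.linearIndependent
  have li2 : LinearIndependent ℝ (fun x : ↥(↑s : Set (Fin k)) => b ↑x) :=
    li.comp _ Subtype.coe_injective
  have himg : ⇑b '' ↑s = Set.range (fun x : ↥(↑s : Set (Fin k)) => b ↑x) := by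
    rw [← Set.image_eq_range]
  rw [himg, finrank_span_eq_card li2]
  simp [Fintype.card_coe]
lemma filter_card_eq' {k : ℕ} {f g : Fin k → ℝ}
    (h : Finset.univ.val.map f = Finset.univ.val.map g) (p : ℝ → Prop) [DecidablePred p] :
    (Finset.univ.filter fun i => p (f i)).card = (Finset.univ.filter fun i => p (g i)).card := by
  have h2 := congrArg (Multiset.countP p) h
  rw [Multiset.countP_map, Multiset.countP_map] at h2
  simpa [Finset.card, Finset.filter] using h2

noncomputable def euclidMulVec {k l : ℕ} (W : Matrix (Fin k) (Fin l) ℝ) :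
    EuclideanSpace ℝ (Fin l) →ₗ[ℝ] EuclideanSpace ℝ (Fin k) where
  toFun x := (WithLp.equiv 2 _).symm (W *ᵥ (WithLp.equiv 2 _ x))
  map_add' x y := by ext i; simp [Matrix.mulVec_add]
  map_smul' a x := by ext i; simp [Matrix.mulVec_smul]

lemma euclidMulVec_coe {k l : ℕ} (W : Matrix (Fin k) (Fin l) ℝ)
    (x : EuclideanSpace ℝ (Fin l)) : ⇑(euclidMulVec W x) = W *ᵥ ⇑x := rfl

end Aux

/-- Eigenvalue domination for contractive compressions (proof of Theorem 5.1):
if `A` is real symmetric positive semidefinite and `Wᵀ W ⪯ I`, then the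
nonincreasingly ordered eigenvalues satisfy `μ_r ≤ λ_r` for every `r`. -/
theorem eigenvalue_domination_contractive_compression
    (n m : ℕ) (hmn : m ≤ n)
    (A : Matrix (Fin n) (Fin n) ℝ) (hA : A.PosSemidef)
    (W : Matrix (Fin n) (Fin m) ℝ)
    (hW : ((1 : Matrix (Fin m) (Fin m) ℝ) - Wᵀ * W).PosSemidef)
    (hB : (Wᵀ * A * W).IsHermitian)
    (lam : Fin n → ℝ)
    (hlam_mono : ∀ i j : Fin n, i ≤ j → lam j ≤ lam i)
    (hlam : Finset.univ.val.map lam = Finset.univ.val.map hA.1.eigenvalues)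
    (mu : Fin m → ℝ)
    (hmu_mono : ∀ i j : Fin m, i ≤ j → mu j ≤ mu i)
    (hmu : Finset.univ.val.map mu = Finset.univ.val.map hB.eigenvalues) :
    ∀ r : Fin m, mu r ≤ lam (Fin.castLE hmn r) := by
  classical
  intro r
  set r' : Fin n := Fin.castLE hmn r with hr'
  -- `lam r' ≥ 0`
  have hlam_nonneg : 0 ≤ lam r' := by
    have hmem : lam r' ∈ Finset.univ.val.map lam :=
      Multiset.mem_map_of_mem lam (Finset.mem_univ_val _)
    rw [hlam] at hmem
    obtain ⟨i, -, hi⟩ := Multiset.mem_map.mp hmem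
    exact hi ▸ hA.eigenvalues_nonneg i
  by_cases hmu0 : mu r ≤ 0
  · exact hmu0.trans hlam_nonneg
  push_neg at hmu0
  -- index sets
  set sA : Finset (Fin n) := Finset.univ.filter (fun i => hA.1.eigenvalues i ≤ lam r') with hsA
  set sB : Finset (Fin m) := Finset.univ.filter (fun j => mu r ≤ hB.eigenvalues j) with hsB
  -- cardinality bounds
  have hcardA : n - r'.1 ≤ sA.card := by
    have h1 : sA.card = (Finset.univ.filter fun i => lam i ≤ lam r').card :=
      (filter_card_eq' hlam (fun t => t ≤ lam r')).symm
    have h2 : Finset.Ici r' ⊆ Finset.univ.filter fun i => lam i ≤ lam r' := by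
      intro i hi
      simp only [Finset.mem_filter, Finset.mem_univ, true_and]
      exact hlam_mono r' i (Finset.mem_Ici.mp hi)
    calc n - r'.1 = (Finset.Ici r').card := (Fin.card_Ici r').symm
      _ ≤ _ := Finset.card_le_card h2
      _ = sA.card := h1.symm
  have hcardB : r.1 + 1 ≤ sB.card := by
    have h1 : sB.card = (Finset.univ.filter fun j => mu r ≤ mu j).card :=
      (filter_card_eq' hmu (fun t => mu r ≤ t)).symm
    have h2 : Finset.Iic r ⊆ Finset.univ.filter fun j => mu r ≤ mu j := by
      intro j hj
      simp only [Finset.mem_filter, Finset.mem_univ, true_and]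
      exact hmu_mono j r (Finset.mem_Iic.mp hj)
    calc r.1 + 1 = (Finset.Iic r).card := (Fin.card_Iic r).symm
      _ ≤ _ := Finset.card_le_card h2
      _ = sB.card := h1.symm
  -- subspaces
  set SB : Submodule ℝ (EuclideanSpace ℝ (Fin m)) :=
    Submodule.span ℝ (⇑hB.eigenvectorBasis '' ↑sB) with hSBdef
  set UA : Submodule ℝ (EuclideanSpace ℝ (Fin n)) :=
    Submodule.span ℝ (⇑hA.1.eigenvectorBasis '' ↑sA) with hUAdef
  -- quadratic form bounds
  have hSB_bound : ∀ x : EuclideanSpace ℝ (Fin m), x ∈ SB →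
      mu r * (⇑x ⬝ᵥ ⇑x) ≤ ⇑x ⬝ᵥ ((Wᵀ * A * W) *ᵥ ⇑x) := by
    intro x hx
    obtain ⟨c, hxx, hxB⟩ := quad_repr' hB sB x hx
    rw [hxx, hxB, Finset.mul_sum]
    refine Finset.sum_le_sum fun j hj => ?_
    have : mu r ≤ hB.eigenvalues j := (Finset.mem_filter.mp hj).2
    exact mul_le_mul_of_nonneg_right this (mul_self_nonneg _)
  have hUA_bound : ∀ y : EuclideanSpace ℝ (Fin n), y ∈ UA →
      ⇑y ⬝ᵥ (A *ᵥ ⇑y) ≤ lam r' * (⇑y ⬝ᵥ ⇑y) := by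
    intro y hy
    obtain ⟨c, hyy, hyA⟩ := quad_repr' hA.1 sA y hy
    rw [hyy, hyA, Finset.mul_sum]
    refine Finset.sum_le_sum fun i hi => ?_
    have : hA.1.eigenvalues i ≤ lam r' := (Finset.mem_filter.mp hi).2
    exact mul_le_mul_of_nonneg_right this (mul_self_nonneg _)
  -- conjugation identity
  have hconj : ∀ v : Fin m → ℝ,
      v ⬝ᵥ ((Wᵀ * A * W) *ᵥ v) = (W *ᵥ v) ⬝ᵥ (A *ᵥ (W *ᵥ v)) := by
    intro v
    rw [← Matrix.mulVec_mulVec, ← Matrix.mulVec_mulVec, Matrix.dotProduct_mulVec,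
      Matrix.vecMul_transpose]
  -- contraction
  have hcontr : ∀ v : Fin m → ℝ, (W *ᵥ v) ⬝ᵥ (W *ᵥ v) ≤ v ⬝ᵥ v := by
    intro v
    have h := hW.dotProduct_mulVec_nonneg v
    rw [star_trivial, Matrix.sub_mulVec, Matrix.one_mulVec, dotProduct_sub,
      ← Matrix.mulVec_mulVec, Matrix.dotProduct_mulVec, Matrix.vecMul_transpose] at h
    linarith
  -- the map
  set LW := euclidMulVec W with hLW
  -- injectivity on SB
  have hker : ∀ x : EuclideanSpace ℝ (Fin m), x ∈ SB → LW x = 0 → x = 0 := by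
    intro x hx hx0
    have hWx : W *ᵥ ⇑x = 0 := congrArg (WithLp.equiv 2 (Fin n → ℝ)) hx0
    have h1 := hSB_bound x hx
    rw [hconj, hWx] at h1
    simp only [Matrix.mulVec_zero, dotProduct_zero] at h1
    have hxx : ⇑x ⬝ᵥ ⇑x ≤ 0 := nonpos_of_mul_nonpos_right h1 hmu0
    have hxx0 : ⇑x ⬝ᵥ ⇑x = 0 := le_antisymm hxx (by
      have := dotProduct_star_self_nonneg (⇑x)
      simpa [star_trivial] using this)
    have : (⇑x : Fin m → ℝ) = 0 := dotProduct_self_eq_zero.mp hxx0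
    have := congrArg (WithLp.equiv 2 _).symm this
    simpa using this
  -- dimensions
  set K : Submodule ℝ (EuclideanSpace ℝ (Fin n)) := SB.map LW with hK
  have hrankK : Module.finrank ℝ K = Module.finrank ℝ SB := by
    have hinj : Function.Injective (LW ∘ₗ SB.subtype) := by
      rw [← LinearMap.ker_eq_bot]
      rw [LinearMap.ker_eq_bot']
      intro x hx0
      have := hker x.1 x.2 hx0
      exact Subtype.ext this
    have hrange : LinearMap.range (LW ∘ₗ SB.subtype) = K := by
      rw [LinearMap.range_comp, Submodule.range_subtype]
    rw [← hrange, LinearMap.finrank_range_of_inj hinj]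
  have hrankSB : Module.finrank ℝ SB = sB.card := finrank_span_onb' hB.eigenvectorBasis sB
  have hrankUA : Module.finrank ℝ UA = sA.card := finrank_span_onb' hA.1.eigenvectorBasis sA
  -- the intersection is nontrivial
  have hne : K ⊓ UA ≠ ⊥ := by
    intro hbot
    have hsum := Submodule.finrank_sup_add_finrank_inf_eq K UA
    rw [hbot] at hsum
    simp only [finrank_bot, add_zero] at hsum
    have hle : Module.finrank ℝ ↥(K ⊔ UA) ≤ n := by
      have := Submodule.finrank_le (K ⊔ UA)
      rwa [finrank_euclideanSpace_fin] at this
    have hrn : r'.1 = r.1 := rfl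
    have hrm : r.1 < m := r.2
    omega
  obtain ⟨y, hyKU, hy0⟩ := Submodule.exists_mem_ne_zero_of_ne_bot hne
  obtain ⟨hyK, hyU⟩ := Submodule.mem_inf.mp hyKU
  obtain ⟨x, hxSB, hxy⟩ := Submodule.mem_map.mp hyK
  have hx0 : x ≠ 0 := by
    rintro rfl
    rw [map_zero] at hxy
    exact hy0 hxy.symm
  have hxx_pos : 0 < ⇑x ⬝ᵥ ⇑x := by
    rcases lt_or_eq_of_le (by
      have := dotProduct_star_self_nonneg (⇑x)
      simpa [star_trivial] using this : (0:ℝ) ≤ ⇑x ⬝ᵥ ⇑x) with h | h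
    · exact h
    · exfalso
      have : (⇑x : Fin m → ℝ) = 0 := dotProduct_self_eq_zero.mp h.symm
      have := congrArg (WithLp.equiv 2 _).symm this
      simp at this
      exact hx0 this
  have hyx : ⇑y = W *ᵥ ⇑x := by
    rw [← hxy, euclidMulVec_coe]
  -- chain of inequalities
  have c1 : mu r * (⇑x ⬝ᵥ ⇑x) ≤ ⇑x ⬝ᵥ ((Wᵀ * A * W) *ᵥ ⇑x) := hSB_bound x hxSB
  have c2 : ⇑x ⬝ᵥ ((Wᵀ * A * W) *ᵥ ⇑x) = ⇑y ⬝ᵥ (A *ᵥ ⇑y) := by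
    rw [hconj, hyx]
  have c3 : ⇑y ⬝ᵥ (A *ᵥ ⇑y) ≤ lam r' * (⇑y ⬝ᵥ ⇑y) := hUA_bound y hyU
  have c4 : lam r' * (⇑y ⬝ᵥ ⇑y) ≤ lam r' * (⇑x ⬝ᵥ ⇑x) := by
    apply mul_le_mul_of_nonneg_left _ hlam_nonneg
    rw [hyx]
    exact hcontr ⇑x
  have : mu r * (⇑x ⬝ᵥ ⇑x) ≤ lam r' * (⇑x ⬝ᵥ ⇑x) := by linarith
  exact (mul_le_mul_iff_of_pos_right hxx_pos).mp this
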